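/- Let P be a 4-regular map on a finite dart set H encoded by (α, σ), where α is a fixed-point-free involution and every cycle of σ has length 4. Define ρ = σ²α (so ρ(h) = α(σ²(h)) with the right-action convention). Then ρ commutes with the straight-ahead dynamics in the following sense: each orbit of the group generated by α and σ² (a 'straight-ahead component' of darts) is a union of exactly two cycles of ρ; consequently, the number of cycles of ρ is even, and the number of straight-ahead components equals (1/2)·(number of cycles of ρ). -/

import Mathlib

/-!
Put `τ = σ²` and `ρ = α * τ`. Since `α` and `τ` are involutions, `α ρ α⁻¹ = ρ⁻¹`, so every
element of `⟨α, τ⟩` is `ρᵏ` or `α ρᵏ`, and the straight-ahead component of `x` is the union of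
the `ρ`-cycles of `x` and of `α x`. These two cycles differ: `α x = ρᵏ x` would make `x` a fixed
point of `α ρᵏ`, which is conjugate to `α` (`k` even) or to `τ` (`k` odd) by a power of `ρ`.
-/

open MulAction Subgroup

section InvolutionPair

variable {G : Type*} [Group G] {a t : G}

theorem mul_mul_zpow_eq_zpow_neg_mul (ha : a * a = 1) (ht : t * t = 1) (k : ℤ) :
    a * (a * t) ^ k = (a * t) ^ (-k) * a := by
  have hconj : a * (a * t) * a⁻¹ = (a * t)⁻¹ := by
    rw [mul_inv_rev, inv_eq_of_mul_eq_one_right ha, inv_eq_of_mul_eq_one_right ht,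
      ← mul_assoc, ha, one_mul]
  calc a * (a * t) ^ k = (a * (a * t) * a⁻¹) ^ k * a := by rw [conj_zpow, inv_mul_cancel_right]
    _ = (a * t) ^ (-k) * a := by rw [hconj, inv_zpow']

theorem mul_mul_zpow_two_mul (ha : a * a = 1) (ht : t * t = 1) (m : ℤ) :
    a * (a * t) ^ (2 * m) = ((a * t) ^ m)⁻¹ * a * (a * t) ^ m := by
  rw [two_mul, zpow_add, ← mul_assoc, mul_mul_zpow_eq_zpow_neg_mul ha ht, zpow_neg]

theorem mul_mul_zpow_two_mul_add_one (ha : a * a = 1) (ht : t * t = 1) (m : ℤ) :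
    a * (a * t) ^ (2 * m + 1) = ((a * t) ^ m)⁻¹ * t * (a * t) ^ m := by
  rw [show 2 * m + 1 = m + (1 + m) by ring, zpow_add, zpow_add, zpow_one, ← mul_assoc,
    mul_mul_zpow_eq_zpow_neg_mul ha ht, zpow_neg]
  simp only [mul_assoc]
  rw [← mul_assoc a a, ha, one_mul]

theorem zpowers_mul_le_closure_pair (a t : G) : zpowers (a * t) ≤ closure {a, t} :=
  zpowers_le.mpr <| mul_mem (subset_closure (Set.mem_insert _ _))
    (subset_closure (Set.mem_insert_of_mem _ rfl))

theorem exists_eq_zpow_or_eq_mul_zpow_of_mem_closure_pair (ha : a * a = 1) (ht : t * t = 1)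
    {g : G} (hg : g ∈ closure {a, t}) : ∃ k : ℤ, g = (a * t) ^ k ∨ g = a * (a * t) ^ k := by
  have hcomm (k : ℤ) : (a * t) ^ k * a = a * (a * t) ^ (-k) := by
    rw [mul_mul_zpow_eq_zpow_neg_mul ha ht, neg_neg]
  induction hg using closure_induction with
  | mem x hx =>
    rcases hx with rfl | rfl
    · exact ⟨0, .inr (by rw [zpow_zero, mul_one])⟩
    · exact ⟨1, .inr (by rw [zpow_one, ← mul_assoc, ha, one_mul])⟩
  | one => exact ⟨0, .inl (zpow_zero _).symm⟩
  | mul x y _ _ hx hy =>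
    obtain ⟨k, rfl | rfl⟩ := hx <;> obtain ⟨l, rfl | rfl⟩ := hy
    · exact ⟨k + l, .inl (zpow_add _ _ _).symm⟩
    · refine ⟨-k + l, .inr ?_⟩
      rw [← mul_assoc, hcomm, mul_assoc, ← zpow_add]
    · exact ⟨k + l, .inr (by rw [mul_assoc, ← zpow_add])⟩
    · refine ⟨-k + l, .inl ?_⟩
      rw [mul_assoc, ← mul_assoc (_ ^ k), hcomm, ← mul_assoc, ← mul_assoc, ha, one_mul,
        ← zpow_add]
  | inv x _ hx =>
    obtain ⟨k, rfl | rfl⟩ := hx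
    · exact ⟨-k, .inl (zpow_neg _ _).symm⟩
    · refine ⟨k, .inr ?_⟩
      rw [mul_inv_rev, inv_eq_of_mul_eq_one_right ha, ← zpow_neg, hcomm, neg_neg]

end InvolutionPair

namespace Equiv.Perm

variable {X : Type*} {α τ : Perm X}

theorem conj_apply_ne_self {p : Perm X} (hp : ∀ x, p x ≠ x) (g : Perm X) (x : X) :
    (g⁻¹ * p * g) x ≠ x := by
  rw [mul_apply, mul_apply, Ne, inv_eq_iff_eq]
  exact hp (g x)

theorem mul_mul_zpow_apply_ne_self (hα : α * α = 1) (hτ : τ * τ = 1) (hαx : ∀ x, α x ≠ x)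
    (hτx : ∀ x, τ x ≠ x) (k : ℤ) (x : X) : (α * (α * τ) ^ k) x ≠ x := by
  obtain ⟨m, rfl | rfl⟩ := Int.even_or_odd' k
  · rw [mul_mul_zpow_two_mul hα hτ]
    exact conj_apply_ne_self hαx _ x
  · rw [mul_mul_zpow_two_mul_add_one hα hτ]
    exact conj_apply_ne_self hτx _ x

end Equiv.Perm

namespace MulAction.orbitRel.Quotient

variable {G X : Type*} [Group G] [MulAction G X]

def mapOfLE {K L : Subgroup G} (hKL : K ≤ L) : orbitRel.Quotient K X → orbitRel.Quotient L X :=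
  Quotient.map' id fun _ _ ⟨g, hg⟩ ↦ ⟨⟨g, hKL g.2⟩, hg⟩

end MulAction.orbitRel.Quotient

theorem Nat.card_eq_mul_of_forall_card_fiber_eq {α β : Type*} (f : α → β) {n : ℕ} (hn : n ≠ 0)
    (hf : ∀ b, Nat.card {a // f a = b} = n) : Nat.card α = Nat.card β * n := by
  have (b : β) : Finite {a // f a = b} := Nat.finite_of_card_ne_zero (by rw [hf b]; exact hn)
  calc Nat.card α = Nat.card (Σ b, {a // f a = b}) :=
        Nat.card_congr (Equiv.sigmaFiberEquiv f).symm
    _ = Nat.card (β × Fin n) := Nat.card_congr <| (Equiv.sigmaCongrRight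
          fun b ↦ Finite.equivFinOfCardEq (hf b)).trans (Equiv.sigmaEquivProd _ _)
    _ = Nat.card β * n := by rw [Nat.card_prod, Nat.card_fin]

section StraightAhead

open orbitRel.Quotient Equiv.Perm

variable {X : Type*} {α τ : Equiv.Perm X}

theorem mk_ne_mk_apply_of_zpowers (hα : α * α = 1) (hτ : τ * τ = 1) (hαx : ∀ x, α x ≠ x)
    (hτx : ∀ x, τ x ≠ x) (x : X) :
    (⟦x⟧ : orbitRel.Quotient (zpowers (α * τ)) X) ≠ ⟦α x⟧ := by
  intro h
  obtain ⟨⟨_, k, rfl⟩, hk⟩ := Quotient.exact h.symm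
  change ((α * τ) ^ k) x = α x at hk
  refine mul_mul_zpow_apply_ne_self hα hτ hαx hτx k x ?_
  rw [mul_apply, hk, ← mul_apply, hα, one_apply]

theorem mapOfLE_eq_mk_iff (hα : α * α = 1) (hτ : τ * τ = 1) (x : X)
    (d : orbitRel.Quotient (zpowers (α * τ)) X) :
    mapOfLE (zpowers_mul_le_closure_pair α τ) d = ⟦x⟧ ↔ d = ⟦x⟧ ∨ d = ⟦α x⟧ := by
  constructor
  · induction d using Quotient.inductionOn with | h y => ?_
    intro h
    obtain ⟨⟨g, hg⟩, rfl⟩ := Quotient.exact h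
    obtain ⟨k, rfl | rfl⟩ := exists_eq_zpow_or_eq_mul_zpow_of_mem_closure_pair hα hτ hg
    · exact .inl (Quotient.sound ⟨⟨_, zpow_mem_zpowers _ k⟩, rfl⟩)
    · refine .inr (Quotient.sound ⟨⟨_, zpow_mem_zpowers _ (-k)⟩, ?_⟩)
      change ((α * τ) ^ (-k)) (α x) = (α * (α * τ) ^ k) x
      rw [mul_mul_zpow_eq_zpow_neg_mul hα hτ, mul_apply]
  · rintro (rfl | rfl)
    · rfl
    · exact Quotient.sound ⟨⟨α, subset_closure (Set.mem_insert _ _)⟩, rfl⟩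

theorem card_fiber_mapOfLE_zpowers_mul (hα : α * α = 1) (hτ : τ * τ = 1) (hαx : ∀ x, α x ≠ x)
    (hτx : ∀ x, τ x ≠ x) (c : orbitRel.Quotient (closure {α, τ}) X) :
    Nat.card {d // mapOfLE (zpowers_mul_le_closure_pair α τ) d = c} = 2 := by
  induction c using Quotient.inductionOn with | h x => ?_
  have hfiber : {d | mapOfLE (zpowers_mul_le_closure_pair α τ) d = ⟦x⟧} = {⟦x⟧, ⟦α x⟧} :=
    Set.ext fun d ↦ mapOfLE_eq_mk_iff hα hτ x d
  rw [← Set.coe_ofPred, Nat.card_coe_set_eq, hfiber,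
    Set.ncard_pair (mk_ne_mk_apply_of_zpowers hα hτ hαx hτx x)]

end StraightAhead

theorem stmt_4_general {H : Type*} (α σ : Equiv.Perm H)
    (hinv : α * α = 1) (hfpf : ∀ h, α h ≠ h)
    (h4 : σ ^ 4 = 1) (h2 : ∀ h, (σ ^ 2) h ≠ h) :
    ∃ f : MulAction.orbitRel.Quotient (Subgroup.zpowers (α * σ ^ 2)) H →
        MulAction.orbitRel.Quotient
          (Subgroup.closure ({α, σ ^ 2} : Set (Equiv.Perm H))) H,
      (∀ x : H, f (Quotient.mk _ x) = Quotient.mk _ x) ∧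
      (∀ c, Nat.card {d // f d = c} = 2) ∧
      Nat.card (MulAction.orbitRel.Quotient (Subgroup.zpowers (α * σ ^ 2)) H) =
        2 * Nat.card (MulAction.orbitRel.Quotient
          (Subgroup.closure ({α, σ ^ 2} : Set (Equiv.Perm H))) H) := by
  have hτ : σ ^ 2 * σ ^ 2 = 1 := by rw [← pow_add]; exact h4
  have hfiber := card_fiber_mapOfLE_zpowers_mul hinv hτ hfpf h2
  refine ⟨orbitRel.Quotient.mapOfLE (zpowers_mul_le_closure_pair α (σ ^ 2)), fun _ ↦ rfl,
    hfiber, ?_⟩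
  rw [Nat.card_eq_mul_of_forall_card_fiber_eq _ two_ne_zero hfiber, mul_comm]

/-- Straight-ahead components of a 4-regular map.  With `ρ = σ²α`
(`ρ h = α (σ² h)`, i.e. `α * σ^2` in Lean's convention), the natural map from
`ρ`-cycles to `⟨α, σ²⟩`-orbits (straight-ahead components) is 2-to-1, so the
number of straight-ahead components is half the number of cycles of `ρ`. -/
theorem stmt_4 {H : Type*} [Fintype H] (α σ : Equiv.Perm H)
    (hinv : α * α = 1) (hfpf : ∀ h, α h ≠ h)
    (h4 : σ ^ 4 = 1) (h2 : ∀ h, (σ ^ 2) h ≠ h) :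
    ∃ f : MulAction.orbitRel.Quotient (Subgroup.zpowers (α * σ ^ 2)) H →
        MulAction.orbitRel.Quotient
          (Subgroup.closure ({α, σ ^ 2} : Set (Equiv.Perm H))) H,
      (∀ x : H, f (Quotient.mk _ x) = Quotient.mk _ x) ∧
      (∀ c, Nat.card {d // f d = c} = 2) ∧
      Nat.card (MulAction.orbitRel.Quotient (Subgroup.zpowers (α * σ ^ 2)) H) =
        2 * Nat.card (MulAction.orbitRel.Quotient
          (Subgroup.closure ({α, σ ^ 2} : Set (Equiv.Perm H))) H) :=
  stmt_4_general α σ hinv hfpf h4 h2
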